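/- arXiv:0710.4024 — 5 statements merged into one kernel-verified Lean document; each statement's English description precedes it below -/
import Mathlib

section
/- For every natural number n, ∑_{k=0}^{n} C(n,k) (-1)^k / (k+1)^2 = H_{n+1} / (n+1), where H_m = ∑_{j=1}^{m} 1/j is the m-th harmonic number. -/
/-!
Absorbing one factor `1 / (k + 1)` into the binomial coefficient,
`C(n, k) / (k + 1) = C(n + 1, k + 1) / (n + 1)`, turns the sum into
`(n + 1)⁻¹ * ∑ (-1)^k C(n + 1, k + 1) / (k + 1)`, and the classical identity
`∑_{k=1}^{m} (-1)^(k-1) C(m, k) / k = H_m` follows by induction on `m` from Pascal's rule,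
the increment being `∑ (-1)^k C(m, k) / (k + 1) = 1 / (m + 1)`, which is the alternating sum
of `C(m + 1, k + 1)` after absorbing the same factor again.
-/

open Finset

section

variable {K : Type*} [Field K] [CharZero K]

theorem Nat.cast_choose_div_add_one (n k : ℕ) :
    (n.choose k : K) / (k + 1) = ((n + 1).choose (k + 1) : K) / (n + 1) := by
  rw [div_eq_div_iff (Nat.cast_add_one_ne_zero k) (Nat.cast_add_one_ne_zero n)]
  exact_mod_cast (mul_comm _ _).trans (Nat.add_one_mul_choose_eq n k)

theorem sum_range_neg_one_pow_mul_choose_succ (m : ℕ) :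
    ∑ k ∈ range (m + 1), (-1 : K) ^ k * ((m + 1).choose (k + 1) : K) = 1 := by
  have h := Int.alternating_sum_range_choose_of_ne (Nat.succ_ne_zero m)
  rw [sum_range_succ'] at h
  have h' : ∑ k ∈ range (m + 1), (-1 : ℤ) ^ k * ((m + 1).choose (k + 1) : ℤ) = 1 := by
    simp only [pow_succ, Nat.choose_zero_right, pow_zero, Nat.cast_one, mul_one, mul_neg_one,
      neg_mul, sum_neg_distrib] at h
    linarith
  exact_mod_cast h'

theorem sum_range_neg_one_pow_mul_choose_div_add_one (m : ℕ) :
    ∑ k ∈ range (m + 1), (-1 : K) ^ k * (m.choose k : K) / (k + 1) = 1 / (m + 1) := by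
  simp_rw [mul_div_assoc, Nat.cast_choose_div_add_one, ← mul_div_assoc, ← sum_div,
    sum_range_neg_one_pow_mul_choose_succ]

theorem sum_range_neg_one_pow_mul_choose_succ_div_add_one (m : ℕ) :
    ∑ k ∈ range m, (-1 : K) ^ k * (m.choose (k + 1) : K) / (k + 1) = harmonic m := by
  induction m with
  | zero => simp
  | succ m ih =>
    have pascal : ∀ k ∈ range (m + 1),
        (-1 : K) ^ k * ((m + 1).choose (k + 1) : K) / (k + 1) =
          (-1 : K) ^ k * (m.choose (k + 1) : K) / (k + 1) +
            (-1 : K) ^ k * (m.choose k : K) / (k + 1) := by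
      intro k _
      rw [Nat.choose_succ_succ, Nat.cast_add]
      ring
    rw [sum_congr rfl pascal, sum_add_distrib, sum_range_neg_one_pow_mul_choose_div_add_one,
      sum_range_succ, Nat.choose_succ_self, ih, harmonic_succ]
    push_cast
    ring

end

theorem stmt_2 (n : ℕ) :
    ∑ k ∈ Finset.range (n + 1), (n.choose k : ℝ) * (-1) ^ k / ((k : ℝ) + 1) ^ 2 =
      (∑ j ∈ Finset.range (n + 1), (1 : ℝ) / (j + 1)) / (n + 1) := by
  have absorb : ∀ k ∈ range (n + 1), (n.choose k : ℝ) * (-1) ^ k / ((k : ℝ) + 1) ^ 2 =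
      (-1 : ℝ) ^ k * ((n + 1).choose (k + 1) : ℝ) / (k + 1) / (n + 1) := by
    intro k _
    calc (n.choose k : ℝ) * (-1) ^ k / ((k : ℝ) + 1) ^ 2
        = (-1 : ℝ) ^ k * ((n.choose k : ℝ) / (k + 1)) / (k + 1) := by
          rw [sq, ← div_div]; ring
      _ = _ := by rw [Nat.cast_choose_div_add_one]; ring
  have harmonic_eq : (harmonic (n + 1) : ℝ) = ∑ j ∈ range (n + 1), (1 : ℝ) / (j + 1) := by
    simp [harmonic]
  rw [sum_congr rfl absorb, ← sum_div, ← Nat.cast_add_one,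
    sum_range_neg_one_pow_mul_choose_succ_div_add_one, harmonic_eq]
end

section
/- For reals β > 0 and α > 0 and natural number n, ∫_{0}^{1} (t^{β-1} - t^{α-1}) (1-t)^n / log t dt = ∑_{k=0}^{n} C(n,k) (-1)^k log((k+β)/(k+α)). -/
/-!
Frullani-type argument: since `d/dx t^(x-1) = t^(x-1) log t`, the quotient
`(t^(b-1) - t^(a-1)) / log t` has `x`-derivative `t^(x-1)`, whose integral over `[0,1]` is `1/x`.
Differentiating under the integral sign gives `∫₀¹ (t^(b-1) - t^(a-1)) / log t dt = log (b/a)`.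
Expanding `(1-t)^n` binomially reduces the theorem to this identity with `a = k + α`, `b = k + β`.
-/

open MeasureTheory intervalIntegral Set Metric

namespace Real

lemma abs_rpow_sub_rpow_div_log_le {a b t : ℝ} (ht : t ∈ Ioc (0 : ℝ) 1) :
    |(t ^ (b - 1) - t ^ (a - 1)) / log t| ≤ |b - a| * t ^ (min a b - 1) := by
  wlog hab : a ≤ b generalizing a b
  · rw [← neg_sub, neg_div, abs_neg, abs_sub_comm, min_comm]
    exact this (le_of_not_ge hab)
  obtain ⟨ht0, ht1⟩ := ht
  rw [min_eq_left hab, abs_of_nonneg (sub_nonneg.mpr hab)]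
  rcases ht1.eq_or_lt with rfl | ht1
  · simp only [log_one, div_zero, abs_zero]
    positivity
  have hlog : log t < 0 := log_neg ht0 ht1
  have hpow_pos : 0 < t ^ (a - 1) := rpow_pos_of_pos ht0 _
  -- `t^(b-1) = t^(a-1) e^{(b-a) log t} ≥ t^(a-1) (1 + (b-a) log t)`
  have hb : t ^ (b - 1) = t ^ (a - 1) * exp (log t * (b - a)) := by
    rw [← rpow_def_of_pos ht0, ← rpow_add ht0]
    ring_nf
  have hexp := add_one_le_exp (log t * (b - a))
  have hle : t ^ (b - 1) ≤ t ^ (a - 1) :=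
    rpow_le_rpow_of_exponent_ge ht0 ht1.le (by linarith)
  rw [abs_div, abs_of_neg hlog, abs_of_nonpos (sub_nonpos.mpr hle),
    div_le_iff₀ (neg_pos.mpr hlog), hb]
  nlinarith

lemma intervalIntegrable_rpow_sub_rpow_div_log {a b : ℝ} (ha : 0 < a) (hb : 0 < b) :
    IntervalIntegrable (fun t => (t ^ (b - 1) - t ^ (a - 1)) / log t) volume 0 1 := by
  refine IntervalIntegrable.mono_fun' (g := fun t => |b - a| * t ^ (min a b - 1))
    ((intervalIntegrable_rpow' (by linarith [lt_min ha hb])).const_mul _)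
    (by fun_prop : Measurable _).aestronglyMeasurable ?_
  filter_upwards [ae_restrict_mem measurableSet_uIoc] with t ht
  rw [uIoc_of_le zero_le_one] at ht
  exact abs_rpow_sub_rpow_div_log_le ht

lemma integral_rpow_sub_one {x : ℝ} (hx : 0 < x) : ∫ t in (0 : ℝ)..1, t ^ (x - 1) = x⁻¹ := by
  rw [integral_rpow (Or.inl (by linarith)), sub_add_cancel, one_rpow, zero_rpow hx.ne']
  simp

lemma hasDerivAt_rpow_sub_div_log {t : ℝ} (ht0 : 0 < t) (ht1 : t ≠ 1) (c x : ℝ) :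
    HasDerivAt (fun z => (t ^ (z - 1) - c) / log t) (t ^ (x - 1)) x := by
  have hlog : log t ≠ 0 := log_ne_zero_of_pos_of_ne_one ht0 ht1
  have h := ((hasStrictDerivAt_const_rpow ht0 (x - 1)).hasDerivAt.comp x
    ((hasDerivAt_id x).sub_const 1)).sub_const c |>.div_const (log t)
  simpa [hlog] using h

lemma hasDerivAt_integral_rpow_sub_rpow_div_log {a x : ℝ} (ha : 0 < a) (hx : 0 < x) :
    HasDerivAt (fun y => ∫ t in (0 : ℝ)..1, (t ^ (y - 1) - t ^ (a - 1)) / log t) x⁻¹ x := by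
  have hbound : ∀ᵐ t, t ∈ uIoc (0 : ℝ) 1 → ∀ z ∈ ball x (x / 2), ‖t ^ (z - 1)‖ ≤ t ^ (x / 2 - 1) := by
    refine Filter.Eventually.of_forall fun t ht z hz => ?_
    rw [uIoc_of_le zero_le_one] at ht
    rw [norm_of_nonneg (rpow_nonneg ht.1.le _)]
    have := (abs_lt.mp (mem_ball_iff_norm.mp hz)).1
    exact rpow_le_rpow_of_exponent_ge ht.1 ht.2 (by linarith)
  have hderiv : ∀ᵐ t, t ∈ uIoc (0 : ℝ) 1 → ∀ z ∈ ball x (x / 2),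
      HasDerivAt (fun y => (t ^ (y - 1) - t ^ (a - 1)) / log t) (t ^ (z - 1)) z := by
    filter_upwards [compl_mem_ae_iff.mpr (measure_singleton (1 : ℝ))] with t ht1 ht z _
    rw [uIoc_of_le zero_le_one] at ht
    exact hasDerivAt_rpow_sub_div_log ht.1 ht1 _ z
  have h := (hasDerivAt_integral_of_dominated_loc_of_deriv_le (ball_mem_nhds x (half_pos hx))
    (Filter.Eventually.of_forall fun z => (by fun_prop : Measurable _).aestronglyMeasurable)
    (intervalIntegrable_rpow_sub_rpow_div_log ha hx)
    (by fun_prop : Measurable fun t : ℝ => t ^ (x - 1)).aestronglyMeasurable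
    hbound (intervalIntegrable_rpow' (by linarith)) hderiv).2
  rwa [integral_rpow_sub_one hx] at h

theorem integral_rpow_sub_rpow_div_log {a b : ℝ} (ha : 0 < a) (hb : 0 < b) :
    ∫ t in (0 : ℝ)..1, (t ^ (b - 1) - t ^ (a - 1)) / log t = log (b / a) := by
  have hpos : ∀ x ∈ uIcc a b, 0 < x := fun x hx => by
    rcases mem_uIcc.mp hx with ⟨h, _⟩ | ⟨h, _⟩ <;> linarith
  have hftc := integral_eq_sub_of_hasDerivAt
    (fun x hx => hasDerivAt_integral_rpow_sub_rpow_div_log ha (hpos x hx))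
    (intervalIntegrable_inv (fun x hx => (hpos x hx).ne') continuousOn_id)
  rw [integral_inv_of_pos ha hb] at hftc
  simpa using hftc.symm

lemma rpow_sub_rpow_mul_one_sub_pow_div_log (α β : ℝ) (n : ℕ) {t : ℝ} (ht : 0 ≤ t) :
    (t ^ (β - 1) - t ^ (α - 1)) * (1 - t) ^ n / log t =
      ∑ k ∈ Finset.range (n + 1), (n.choose k : ℝ) * (-1) ^ k *
        ((t ^ (k + β - 1) - t ^ (k + α - 1)) / log t) := by
  rcases ht.eq_or_lt with rfl | ht0
  · simp
  have hshift : ∀ (γ : ℝ) (k : ℕ), t ^ (k + γ - 1) = t ^ (γ - 1) * t ^ k := fun γ k => by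
    rw [← rpow_natCast, ← rpow_add ht0]
    ring_nf
  rw [show (1 : ℝ) - t = -t + 1 by ring, add_pow, Finset.mul_sum, Finset.sum_div]
  refine Finset.sum_congr rfl fun k _ => ?_
  rw [hshift, hshift, neg_pow]
  ring

end Real

theorem stmt_3 (α β : ℝ) (hα : 0 < α) (hβ : 0 < β) (n : ℕ) :
    ∫ t in (0:ℝ)..1, (t ^ (β - 1) - t ^ (α - 1)) * (1 - t) ^ n / Real.log t =
      ∑ k ∈ Finset.range (n + 1),
        (n.choose k : ℝ) * (-1) ^ k * Real.log ((k + β) / (k + α)) := by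
  have hα' : ∀ k : ℕ, 0 < (k : ℝ) + α := fun k => by positivity
  have hβ' : ∀ k : ℕ, 0 < (k : ℝ) + β := fun k => by positivity
  rw [integral_congr fun t ht => Real.rpow_sub_rpow_mul_one_sub_pow_div_log α β n
      (by rw [uIcc_of_le zero_le_one] at ht; exact ht.1),
    integral_finsetSum fun k _ =>
      (Real.intervalIntegrable_rpow_sub_rpow_div_log (hα' k) (hβ' k)).const_mul _]
  refine Finset.sum_congr rfl fun k _ => ?_
  rw [intervalIntegral.integral_const_mul, Real.integral_rpow_sub_rpow_div_log (hα' k) (hβ' k)]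
end

section
/- ∫_{0}^{1} log x · log(1-x) dx = 2 - π²/6. -/
/-! Expanding `-log (1 - x) = ∑ xⁿ⁺¹ / (n + 1)` and integrating term by term against `-log x`
with `∫₀¹ xⁿ log x = -1 / (n + 1)²` turns the integral into `∑ 1 / ((n + 1)(n + 2)²)`; the
terms are nonnegative on `(0, 1)`, so summability of their integrals justifies the interchange.
The partial fractions `1/(n + 1) - 1/(n + 2) - 1/(n + 2)²` split this into a telescoping sum,
equal to `1`, minus `ζ(2) - 1`. -/

open Real MeasureTheory Filter Topology Set

lemma hasSum_sub_succ_of_antitone {f : ℕ → ℝ} (hf : Antitone f) (hf0 : Tendsto f atTop (𝓝 0)) :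
    HasSum (fun n => f n - f (n + 1)) (f 0) := by
  rw [hasSum_iff_tendsto_nat_of_nonneg fun n => sub_nonneg.2 (hf n.le_succ)]
  simp_rw [Finset.sum_range_sub']
  simpa using tendsto_const_nhds.sub hf0

lemma hasSum_one_div_succ_mul_add_two_sq :
    HasSum (fun n : ℕ => 1 / (((n : ℝ) + 1) * ((n : ℝ) + 2) ^ 2)) (2 - π ^ 2 / 6) := by
  have htelescope : HasSum (fun n : ℕ => 1 / ((n : ℝ) + 1) - 1 / ((n : ℝ) + 2)) 1 := by
    have hanti : Antitone fun n : ℕ => 1 / ((n : ℝ) + 1) := fun m n hmn =>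
      one_div_le_one_div_of_le (by positivity) (by gcongr)
    simpa [add_assoc, one_add_one_eq_two] using
      hasSum_sub_succ_of_antitone hanti tendsto_one_div_add_atTop_nhds_zero_nat
  have hzeta : HasSum (fun n : ℕ => 1 / ((n : ℝ) + 2) ^ 2) (π ^ 2 / 6 - 1) := by
    have := (hasSum_nat_add_iff' 2).mpr hasSum_zeta_two
    simpa [Finset.sum_range_succ] using this
  have hsplit : ∀ n : ℕ, 1 / (((n : ℝ) + 1) * ((n : ℝ) + 2) ^ 2)
      = 1 / ((n : ℝ) + 1) - 1 / ((n : ℝ) + 2) - 1 / ((n : ℝ) + 2) ^ 2 := fun n => by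
    field_simp
    ring
  simpa only [hsplit, show (1 : ℝ) - (π ^ 2 / 6 - 1) = 2 - π ^ 2 / 6 by ring]
    using htelescope.sub hzeta

lemma integral_pow_mul_log (n : ℕ) :
    ∫ x in (0 : ℝ)..1, x ^ n * log x = -1 / ((n : ℝ) + 1) ^ 2 := by
  have hn : (n : ℝ) + 1 ≠ 0 := by positivity
  let F : ℝ → ℝ := fun x => x ^ (n + 1) * log x / (n + 1) - x ^ (n + 1) / (n + 1) ^ 2
  have hcont : Continuous F := by
    have : Continuous fun x : ℝ => x ^ (n + 1) * log x :=
      ((continuous_pow n).mul continuous_mul_log).congr fun x => by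
        simp only [Pi.mul_apply]
        ring
    fun_prop
  have hderiv : ∀ x ∈ Ioo (0 : ℝ) 1, HasDerivAt F (x ^ n * log x) x := by
    intro x hx
    have hx0 : x ≠ 0 := hx.1.ne'
    refine ((((hasDerivAt_pow (n + 1) x).mul (hasDerivAt_log hx0)).div_const ((n : ℝ) + 1)).sub
      ((hasDerivAt_pow (n + 1) x).div_const (((n : ℝ) + 1) ^ 2))).congr_deriv ?_
    field_simp
    push_cast
    ring
  have hint : IntervalIntegrable (fun x : ℝ => x ^ n * log x) volume 0 1 :=
    intervalIntegral.intervalIntegrable_log'.continuousOn_mul (continuous_pow n).continuousOn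
  rw [intervalIntegral.integral_eq_sub_of_hasDerivAt_of_le zero_le_one hcont.continuousOn
    hderiv hint]
  simp [F, neg_div]

lemma hasSum_log_mul_log_one_sub {x : ℝ} (hx : |x| < 1) :
    HasSum (fun n : ℕ => -log x * (x ^ (n + 1) / (n + 1))) (log x * log (1 - x)) := by
  simpa using (hasSum_pow_div_log_of_abs_lt_one hx).mul_left (-log x)

lemma integral_neg_log_mul_pow_succ_div (n : ℕ) :
    ∫ x in (0 : ℝ)..1, -log x * (x ^ (n + 1) / (n + 1))
      = 1 / (((n : ℝ) + 1) * ((n : ℝ) + 2) ^ 2) := by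
  have hn : (n : ℝ) + 1 ≠ 0 := by positivity
  simp_rw [show ∀ x : ℝ, -log x * (x ^ (n + 1) / (n + 1)) = -(x ^ (n + 1) * log x) / (n + 1)
    from fun x => by ring]
  rw [intervalIntegral.integral_div, intervalIntegral.integral_neg, integral_pow_mul_log]
  push_cast
  field_simp
  ring

lemma hasSum_integral_log_mul_log_one_sub :
    HasSum (fun n : ℕ => 1 / (((n : ℝ) + 1) * ((n : ℝ) + 2) ^ 2))
      (∫ x in (0 : ℝ)..1, log x * log (1 - x)) := by
  set F : ℕ → ℝ → ℝ := fun n x => -log x * (x ^ (n + 1) / (n + 1))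
  have hF_int (n : ℕ) : IntegrableOn (F n) (Ioo 0 1) := by
    have : IntervalIntegrable (F n) volume 0 1 :=
      intervalIntegral.intervalIntegrable_log'.neg.mul_continuousOn (by fun_prop)
    exact ((intervalIntegrable_iff_integrableOn_Ioc_of_le zero_le_one).1 this).mono_set
      Ioo_subset_Ioc_self
  have hF_integral (n : ℕ) : ∫ x in Ioo 0 1, F n x = 1 / (((n : ℝ) + 1) * ((n : ℝ) + 2) ^ 2) := by
    rw [← integral_Ioc_eq_integral_Ioo, ← intervalIntegral.integral_of_le zero_le_one]
    exact integral_neg_log_mul_pow_succ_div n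
  have hF_norm (n : ℕ) : ∫ x in Ioo 0 1, ‖F n x‖ = ∫ x in Ioo 0 1, F n x := by
    refine setIntegral_congr_fun measurableSet_Ioo fun x hx => norm_of_nonneg ?_
    have : 0 ≤ x := hx.1.le
    exact mul_nonneg (neg_nonneg.2 (log_nonpos hx.1.le hx.2.le)) (by positivity)
  have hsum := hasSum_integral_of_summable_integral_norm hF_int
    (by simpa only [hF_norm, hF_integral] using hasSum_one_div_succ_mul_add_two_sq.summable)
  have hpointwise : EqOn (fun x => log x * log (1 - x)) (fun x => ∑' n, F n x) (Ioo 0 1) :=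
    fun x hx => (hasSum_log_mul_log_one_sub (abs_lt.2 ⟨by linarith [hx.1], hx.2⟩)).tsum_eq.symm
  rw [intervalIntegral.integral_of_le zero_le_one, integral_Ioc_eq_integral_Ioo,
    setIntegral_congr_fun measurableSet_Ioo hpointwise]
  simpa only [hF_integral] using hsum

theorem stmt_5 :
    ∫ x in (0:ℝ)..1, Real.log x * Real.log (1 - x) = 2 - Real.pi ^ 2 / 6 :=
  hasSum_integral_log_mul_log_one_sub.unique hasSum_one_div_succ_mul_add_two_sq
end

section
/- ∑_{n=1}^{∞} H_n / (n² (n+1)) = 2 ζ(3) - ζ(2), where H_n is the n-th harmonic number. -/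
/-!
Since `1 / (n² (n + 1)) = 1 / n² - 1 / (n (n + 1))`, the series splits as
`∑ H_n / n² - ∑ H_n / (n (n + 1))`.

Summation by parts gives `∑_{n ≤ N} H_n / (n (n + 1)) = ∑_{n ≤ N} 1 / n² - H_N / (N + 1)`, and
`H_N / N → 0` (Cesàro), so the second series is `ζ(2)`. Comparing with it, `∑ H_n / n²` converges.

For Euler's `∑ H_n / n² = 2 ζ(3)`, sum Tornheim's double series `∑_{m,n ≥ 1} 1 / (m n (m + n))`
in two ways. Along rows, `∑_n 1 / (n (m + n)) = H_m / m` telescopes, giving `∑ H_m / m²`. Along the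
antidiagonals `m + n = k`, `1 / (m n) = (1 / m + 1 / n) / k` gives `2 ∑ H_{k-1} / k²`, which is
`2 (∑ H_k / k² - ζ(3))`.
-/

open Finset Filter Topology

theorem harmonic_cast_eq_sum (n : ℕ) :
    (harmonic n : ℝ) = ∑ j ∈ range n, 1 / ((j : ℝ) + 1) := by
  simp [harmonic]

theorem harmonic_cast_succ (n : ℕ) :
    (harmonic (n + 1) : ℝ) = harmonic n + 1 / ((n : ℝ) + 1) := by
  simp [harmonic_succ]

theorem harmonic_cast_nonneg (n : ℕ) : (0 : ℝ) ≤ harmonic n := by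
  rw [harmonic_cast_eq_sum]; positivity

theorem tendsto_harmonic_div_atTop :
    Tendsto (fun n : ℕ => (harmonic n : ℝ) / n) atTop (𝓝 0) := by
  refine tendsto_one_div_add_atTop_nhds_zero_nat.cesaro.congr fun n => ?_
  rw [harmonic_cast_eq_sum, div_eq_inv_mul]

theorem tendsto_harmonic_div_add_one_atTop :
    Tendsto (fun n : ℕ => (harmonic n : ℝ) / (n + 1)) atTop (𝓝 0) :=
  tendsto_of_tendsto_of_tendsto_of_le_of_le' tendsto_const_nhds tendsto_harmonic_div_atTop
    (.of_forall fun n => div_nonneg (harmonic_cast_nonneg n) (by positivity))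
    ((eventually_gt_atTop 0).mono fun n hn =>
      div_le_div_of_nonneg_left (harmonic_cast_nonneg n) (by positivity) (by linarith))

theorem antitone_one_div_add_one : Antitone fun n : ℕ => 1 / ((n : ℝ) + 1) :=
  fun _ _ hab => one_div_le_one_div_of_le (by positivity) (by gcongr)

theorem Antitone.hasSum_sub_add {g : ℕ → ℝ} (hg : Antitone g) (h0 : Tendsto g atTop (𝓝 0))
    (m : ℕ) : HasSum (fun n => g n - g (n + m)) (∑ i ∈ range m, g i) := by
  refine (hasSum_iff_tendsto_nat_of_nonneg (fun n => sub_nonneg.2 (hg (n.le_add_right m))) _).2 ?_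
  have partial_sum (N : ℕ) : ∑ n ∈ range N, (g n - g (n + m)) =
      ∑ i ∈ range m, g i - ∑ i ∈ range m, g (N + i) := by
    have h₁ := sum_range_add g N m
    have h₂ := sum_range_add g m N
    rw [add_comm m N] at h₂
    simp only [sum_sub_distrib, add_comm _ m]
    linarith
  have tail : Tendsto (fun N => ∑ i ∈ range m, g (N + i)) atTop (𝓝 0) := by
    simpa using tendsto_finsetSum (range m) fun i _ =>
      h0.comp (tendsto_add_atTop_nat i)
  simpa [partial_sum] using tail.const_sub (∑ i ∈ range m, g i)

theorem HasSum.sum_antidiagonal {α : Type*} [AddCommMonoid α] [TopologicalSpace α]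
    [ContinuousAdd α] [RegularSpace α] {f : ℕ × ℕ → α} {a : α} (h : HasSum f a) :
    HasSum (fun n => ∑ p ∈ antidiagonal n, f p) a :=
  HasSum.sigma (HasAntidiagonal.sigmaAntidiagonalEquivProd.hasSum_iff.2 h) fun _ =>
    (Finset.sum_coe_sort _ f) ▸ hasSum_fintype _

theorem hasSum_one_div_add_one_sq :
    HasSum (fun n : ℕ => 1 / ((n : ℝ) + 1) ^ 2) (Real.pi ^ 2 / 6) := by
  simpa using (hasSum_nat_add_iff' 1).2 hasSum_zeta_two

theorem sum_range_harmonic_div_mul (N : ℕ) :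
    ∑ n ∈ range N, (harmonic (n + 1) : ℝ) / ((n + 1) * (n + 2)) =
      ∑ n ∈ range N, 1 / ((n : ℝ) + 1) ^ 2 - harmonic N / (N + 1) := by
  induction N with
  | zero => simp
  | succ N ih =>
    rw [sum_range_succ, sum_range_succ, ih, harmonic_cast_succ]
    push_cast
    field_simp
    ring

theorem hasSum_harmonic_div_mul :
    HasSum (fun n : ℕ => (harmonic (n + 1) : ℝ) / ((n + 1) * (n + 2))) (Real.pi ^ 2 / 6) := by
  refine (hasSum_iff_tendsto_nat_of_nonneg (fun n => ?_) _).2 ?_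
  · have := harmonic_cast_nonneg (n + 1); positivity
  · simp only [sum_range_harmonic_div_mul]
    simpa using hasSum_one_div_add_one_sq.tendsto_sum_nat.sub tendsto_harmonic_div_add_one_atTop

theorem summable_harmonic_div_sq :
    Summable fun n : ℕ => (harmonic (n + 1) : ℝ) / ((n : ℝ) + 1) ^ 2 := by
  refine (hasSum_harmonic_div_mul.summable.mul_left 2).of_nonneg_of_le
    (fun n => div_nonneg (harmonic_cast_nonneg _) (by positivity)) fun n => ?_
  have hH := harmonic_cast_nonneg (n + 1)
  rw [← mul_div_assoc, div_le_div_iff₀ (by positivity) (by positivity)]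
  nlinarith [mul_nonneg (mul_nonneg hH n.cast_nonneg) (by positivity : (0 : ℝ) ≤ n + 1)]

/-- The summand of Tornheim's series `∑_{m,n ≥ 1} 1 / (m n (m + n))`, indexed from `0`. -/
noncomputable def tornheimTerm (p : ℕ × ℕ) : ℝ :=
  1 / ((p.1 + 1) * (p.2 + 1) * (p.1 + p.2 + 2))

theorem tornheimTerm_nonneg : 0 ≤ tornheimTerm := fun p => by
  unfold tornheimTerm; positivity

theorem hasSum_tornheimTerm_row (a : ℕ) :
    HasSum (fun b => tornheimTerm (a, b)) ((harmonic (a + 1) : ℝ) / (a + 1) ^ 2) := by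
  have h := (antitone_one_div_add_one.hasSum_sub_add tendsto_one_div_add_atTop_nhds_zero_nat
    (a + 1)).mul_left (1 / ((a : ℝ) + 1) ^ 2)
  rw [← harmonic_cast_eq_sum, one_div_mul_eq_div] at h
  refine h.congr_fun fun b => ?_
  unfold tornheimTerm
  push_cast
  field_simp
  ring

theorem sum_antidiagonal_tornheimTerm (n : ℕ) :
    ∑ p ∈ antidiagonal n, tornheimTerm p = 2 * ((harmonic (n + 1) : ℝ) / (n + 2) ^ 2) := by
  have h (p) (hp : p ∈ antidiagonal n) : tornheimTerm p =
      (1 / ((n : ℝ) + 2) ^ 2) * (1 / ((p.1 : ℝ) + 1) + 1 / ((p.2 : ℝ) + 1)) := by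
    rw [HasAntidiagonal.mem_antidiagonal] at hp
    have : (p.1 : ℝ) + p.2 = n := by exact_mod_cast hp
    unfold tornheimTerm
    rw [← this]
    field_simp
    ring
  have hswap : ∑ p ∈ antidiagonal n, 1 / ((p.2 : ℝ) + 1) =
      ∑ p ∈ antidiagonal n, 1 / ((p.1 : ℝ) + 1) :=
    Nat.sum_antidiagonal_swap (f := fun p => 1 / ((p.1 : ℝ) + 1))
  rw [sum_congr rfl h, ← mul_sum, sum_add_distrib, hswap,
    Nat.sum_antidiagonal_eq_sum_range_succ_mk, ← harmonic_cast_eq_sum]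
  ring

theorem hasSum_tornheimTerm :
    HasSum tornheimTerm (∑' n : ℕ, (harmonic (n + 1) : ℝ) / ((n : ℝ) + 1) ^ 2) := by
  have hsum : Summable tornheimTerm := (summable_prod_of_nonneg tornheimTerm_nonneg).2
    ⟨fun a => (hasSum_tornheimTerm_row a).summable,
      summable_harmonic_div_sq.congr fun a => (hasSum_tornheimTerm_row a).tsum_eq.symm⟩
  rw [(hsum.hasSum.prod_fiberwise hasSum_tornheimTerm_row).tsum_eq]
  exact hsum.hasSum

theorem tsum_harmonic_div_sq :
    ∑' n : ℕ, (harmonic (n + 1) : ℝ) / ((n : ℝ) + 1) ^ 2 =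
      2 * ∑' n : ℕ, 1 / ((n : ℝ) + 1) ^ 3 := by
  set S := ∑' n : ℕ, (harmonic (n + 1) : ℝ) / ((n : ℝ) + 1) ^ 2
  set Z := ∑' n : ℕ, 1 / ((n : ℝ) + 1) ^ 3
  have hZ : HasSum (fun n : ℕ => 1 / ((n : ℝ) + 1) ^ 3) Z := Summable.hasSum <| by
    exact_mod_cast (summable_nat_add_iff 1).2 (Real.summable_one_div_nat_pow.2 (by norm_num))
  have hdiff : HasSum (fun n : ℕ => (harmonic n : ℝ) / ((n : ℝ) + 1) ^ 2) (S - Z) := by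
    refine (summable_harmonic_div_sq.hasSum.sub hZ).congr_fun fun n => ?_
    rw [harmonic_cast_succ]
    field_simp
    ring
  have hshift : HasSum (fun n : ℕ => (harmonic (n + 1) : ℝ) / ((n : ℝ) + 2) ^ 2) (S - Z) := by
    simpa [add_assoc, one_add_one_eq_two] using (hasSum_nat_add_iff' 1).2 hdiff
  have hdiag := hasSum_tornheimTerm.sum_antidiagonal
  simp only [sum_antidiagonal_tornheimTerm] at hdiag
  linarith [hdiag.unique (hshift.mul_left 2)]

theorem stmt_16 :
    ∑' n : ℕ, (∑ j ∈ Finset.range (n + 1), (1 : ℝ) / (j + 1)) /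
        (((n : ℝ) + 1) ^ 2 * ((n : ℝ) + 2)) =
      2 * (∑' n : ℕ, (1 : ℝ) / ((n : ℝ) + 1) ^ 3) - Real.pi ^ 2 / 6 := by
  have hterm (n : ℕ) : (∑ j ∈ range (n + 1), (1 : ℝ) / (j + 1)) /
      (((n : ℝ) + 1) ^ 2 * ((n : ℝ) + 2)) =
        (harmonic (n + 1) : ℝ) / ((n : ℝ) + 1) ^ 2 -
          (harmonic (n + 1) : ℝ) / ((n + 1) * (n + 2)) := by
    rw [← harmonic_cast_eq_sum]
    field_simp
    ring
  rw [tsum_congr hterm, ← tsum_harmonic_div_sq]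
  exact (summable_harmonic_div_sq.hasSum.sub hasSum_harmonic_div_mul).tsum_eq
end

section
/- ∑_{n=1}^{∞} H_n / n³ = (1/2) ζ(2)² = π⁴/72, where H_n is the n-th harmonic number. -/
/-!
Summing `ζ(2)² = (∑ 1/(i+1)²)²` along antidiagonals `i + j = n - 1` and decomposing
`1/(a²b²) = (1/a² + 1/b²)/(a+b)² + 2(1/a + 1/b)/(a+b)³` gives
`ζ(2)² = 2 ∑ₙ Qₙ/(n+1)² + 4 ∑ₙ Hₙ/(n+1)³` with `Qₙ = ∑_{m<n} 1/(m+1)²`.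
The first series is the strictly-lower-triangular half of `ζ(2)²`, namely `(ζ(2)² - ζ(4))/2`,
so `∑ Hₙ/(n+1)³ = ζ(4)/4`; since `H_{n+1} = Hₙ + 1/(n+1)`, the sum asked for is
`ζ(4)/4 + ζ(4) = 5ζ(4)/4 = π⁴/72`.
-/

open Finset Real

theorem hasSum_nat_succ_iff_of_eq_zero {G : Type*} [AddCommGroup G] [TopologicalSpace G]
    [IsTopologicalAddGroup G] {f : ℕ → G} {a : G} (h0 : f 0 = 0) :
    HasSum (fun n ↦ f (n + 1)) a ↔ HasSum f a := by
  simpa [h0] using hasSum_nat_add_iff (f := f) (g := a) 1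

theorem hasSum_one_div_nat_succ_pow {k : ℕ} (hk : k ≠ 0) {a : ℝ}
    (h : HasSum (fun n : ℕ ↦ 1 / (n : ℝ) ^ k) a) :
    HasSum (fun n : ℕ ↦ 1 / ((n : ℝ) + 1) ^ k) a := by
  simpa using (hasSum_nat_succ_iff_of_eq_zero (by simp [hk])).mpr h

theorem two_mul_sum_range_mul_sum_range {R : Type*} [CommRing R] (f : ℕ → R) (N : ℕ) :
    2 * ∑ n ∈ range N, f n * ∑ m ∈ range n, f m =
      (∑ n ∈ range N, f n) ^ 2 - ∑ n ∈ range N, f n ^ 2 := by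
  induction N with
  | zero => simp
  | succ N ih => rw [sum_range_succ, mul_add, ih, sum_range_succ, sum_range_succ]; ring

theorem hasSum_mul_sum_range_of_nonneg {f : ℕ → ℝ} (hf : ∀ n, 0 ≤ f n) {s t : ℝ}
    (hs : HasSum f s) (ht : HasSum (fun n ↦ f n ^ 2) t) :
    HasSum (fun n ↦ f n * ∑ m ∈ range n, f m) ((s ^ 2 - t) / 2) := by
  rw [hasSum_iff_tendsto_nat_of_nonneg fun n ↦ mul_nonneg (hf n) (sum_nonneg fun m _ ↦ hf m)]
  refine (((hs.tendsto_sum_nat.pow 2).sub ht.tendsto_sum_nat).div_const 2).congr fun N ↦ ?_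
  rw [← two_mul_sum_range_mul_sum_range]
  ring

theorem hasSum_sum_antidiagonal_mul_of_nonneg {f g : ℕ → ℝ} (hf₀ : 0 ≤ f) (hg₀ : 0 ≤ g)
    {a b : ℝ} (hf : HasSum f a) (hg : HasSum g b) :
    HasSum (fun n ↦ ∑ p ∈ antidiagonal n, f p.1 * g p.2) (a * b) := by
  have hfg := hf.summable.mul_of_nonneg hg.summable hf₀ hg₀
  rw [(summable_sum_mul_antidiagonal_of_summable_mul hfg).hasSum_iff,
    ← hf.summable.tsum_mul_tsum_eq_tsum_sum_antidiagonal hg.summable hfg, hf.tsum_eq, hg.tsum_eq]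

theorem one_div_sq_mul_one_div_sq_eq {K : Type*} [Field K] {a b : K} (ha : a ≠ 0) (hb : b ≠ 0)
    (hab : a + b ≠ 0) :
    1 / a ^ 2 * (1 / b ^ 2) =
      (1 / a ^ 2 + 1 / b ^ 2) / (a + b) ^ 2 + 2 * (1 / a + 1 / b) / (a + b) ^ 3 := by
  field_simp
  ring

theorem Finset.Nat.sum_antidiagonal_add_swap {M : Type*} [AddCommMonoid M] (g : ℕ → M) (k : ℕ) :
    ∑ p ∈ antidiagonal k, (g p.1 + g p.2) = 2 • ∑ i ∈ range (k + 1), g i := by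
  rw [sum_add_distrib, ← Nat.sum_antidiagonal_swap (f := fun p ↦ g p.2)]
  simp only [Prod.snd_swap]
  rw [Nat.sum_antidiagonal_eq_sum_range_succ_mk, two_nsmul]

theorem sum_antidiagonal_one_div_succ_sq_mul (k : ℕ) :
    ∑ p ∈ antidiagonal k, 1 / ((p.1 : ℝ) + 1) ^ 2 * (1 / ((p.2 : ℝ) + 1) ^ 2) =
      2 * (∑ i ∈ range (k + 1), 1 / ((i : ℝ) + 1) ^ 2) / ((k : ℝ) + 2) ^ 2 +
        4 * (∑ i ∈ range (k + 1), 1 / ((i : ℝ) + 1)) / ((k : ℝ) + 2) ^ 3 := by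
  calc _ = ∑ p ∈ antidiagonal k,
        ((1 / ((p.1 : ℝ) + 1) ^ 2 + 1 / ((p.2 : ℝ) + 1) ^ 2) / ((k : ℝ) + 2) ^ 2 +
          2 * (1 / ((p.1 : ℝ) + 1) + 1 / ((p.2 : ℝ) + 1)) / ((k : ℝ) + 2) ^ 3) := by
        refine sum_congr rfl fun p hp ↦ ?_
        have hsum : (p.1 : ℝ) + 1 + ((p.2 : ℝ) + 1) = k + 2 := by
          rw [← mem_antidiagonal.mp hp]; push_cast; ring
        rw [one_div_sq_mul_one_div_sq_eq (by positivity) (by positivity) (by positivity), hsum]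
    _ = _ := by
        rw [sum_add_distrib, ← sum_div, ← sum_div, ← mul_sum,
          Nat.sum_antidiagonal_add_swap (fun i ↦ 1 / ((i : ℝ) + 1) ^ 2),
          Nat.sum_antidiagonal_add_swap (fun i ↦ 1 / ((i : ℝ) + 1))]
        simp only [nsmul_eq_mul]
        ring

theorem hasSum_harmonic_div_succ_pow_three :
    HasSum (fun n : ℕ ↦ (∑ m ∈ range n, 1 / ((m : ℝ) + 1)) / ((n : ℝ) + 1) ^ 3) (π ^ 4 / 360) := by
  have hζ₂ := hasSum_one_div_nat_succ_pow two_ne_zero hasSum_zeta_two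
  have hζ₄ := hasSum_one_div_nat_succ_pow four_ne_zero hasSum_zeta_four
  have hnonneg : 0 ≤ fun n : ℕ ↦ 1 / ((n : ℝ) + 1) ^ 2 := fun n ↦ by positivity
  have hlower : HasSum (fun n : ℕ ↦ 1 / ((n : ℝ) + 1) ^ 2 * ∑ m ∈ range n, 1 / ((m : ℝ) + 1) ^ 2)
      (((π ^ 2 / 6) ^ 2 - π ^ 4 / 90) / 2) := by
    refine hasSum_mul_sum_range_of_nonneg hnonneg hζ₂ (hζ₄.congr_fun fun n ↦ ?_)
    rw [div_pow, one_pow, ← pow_mul]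
  have hcauchy : HasSum (fun n : ℕ ↦
      2 * (∑ m ∈ range n, 1 / ((m : ℝ) + 1) ^ 2) / ((n : ℝ) + 1) ^ 2 +
        4 * (∑ m ∈ range n, 1 / ((m : ℝ) + 1)) / ((n : ℝ) + 1) ^ 3) ((π ^ 2 / 6) ^ 2) := by
    rw [← hasSum_nat_succ_iff_of_eq_zero (by simp)]
    rw [sq]
    refine (hasSum_sum_antidiagonal_mul_of_nonneg hnonneg hnonneg hζ₂ hζ₂).congr_fun fun k ↦ ?_
    rw [sum_antidiagonal_one_div_succ_sq_mul]
    push_cast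
    ring
  have hvalue : π ^ 4 / 360 = ((π ^ 2 / 6) ^ 2 - 2 * (((π ^ 2 / 6) ^ 2 - π ^ 4 / 90) / 2)) / 4 := by
    ring
  rw [hvalue]
  refine ((hcauchy.sub (hlower.mul_left 2)).div_const 4).congr_fun fun n ↦ ?_
  ring

theorem stmt_18 :
    ∑' n : ℕ, (∑ j ∈ Finset.range (n + 1), (1 : ℝ) / (j + 1)) / ((n : ℝ) + 1) ^ 3 =
      Real.pi ^ 4 / 72 := by
  have hζ₄ := hasSum_one_div_nat_succ_pow four_ne_zero hasSum_zeta_four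
  have hsum := hasSum_harmonic_div_succ_pow_three.add hζ₄
  rw [show π ^ 4 / 72 = π ^ 4 / 360 + π ^ 4 / 90 by ring]
  refine (hsum.congr_fun fun n ↦ ?_).tsum_eq
  rw [sum_range_succ, add_div, div_div, ← pow_succ']
end
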